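/- arXiv:2402.17765 — 4 statements merged into one kernel-verified Lean document; each statement's English description precedes it below -/
import Mathlib

section
/- Let 0 < p < 1/2. Then Σ_{n=1}^∞ Σ_{w∈{1,2,3}ⁿ} α₁(C_w) = ∞, i.e., the sum over all nonempty finite words w of the operator norms ‖C_w‖ diverges; consequently s₀ := inf{ s > 0 : Σ_{n=1}^∞ Σ_{w∈{1,2,3}ⁿ} φ^s(C_w) < ∞ } satisfies s₀ ≥ 1. -/
open Matrix MeasureTheory Filter
open scoped ENNReal

noncomputable section

abbrev E3 : Type := EuclideanSpace ℝ (Fin 3)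
abbrev Mat3 : Type := Matrix (Fin 3) (Fin 3) ℝ

/-- The action of a matrix on Euclidean 3-space. -/
noncomputable def matApply (A : Mat3) (x : E3) : E3 := Matrix.toEuclideanCLM (𝕜 := ℝ) A x

/-- The largest singular value `α₁(A) = ‖A‖` (Euclidean operator norm). -/
noncomputable def sv1 (A : Mat3) : ℝ := ‖Matrix.toEuclideanCLM (𝕜 := ℝ) A‖

/-- The smallest singular value `α₃(A) = ‖A⁻¹‖⁻¹`. -/
noncomputable def sv3 (A : Mat3) : ℝ := (‖Matrix.toEuclideanCLM (𝕜 := ℝ) A⁻¹‖)⁻¹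

/-- The middle singular value `α₂(A) = |det A| / (α₁(A) α₃(A))`. -/
noncomputable def sv2 (A : Mat3) : ℝ := |A.det| / (sv1 A * sv3 A)

/-- Falconer's singular value function `φ^s(A)`. -/
noncomputable def svf (s : ℝ) (A : Mat3) : ℝ :=
  if s ≤ 1 then (sv1 A) ^ s
  else if s ≤ 2 then sv1 A * (sv2 A) ^ (s - 1)
  else if s ≤ 3 then sv1 A * sv2 A * (sv3 A) ^ (s - 2)
  else (sv1 A * sv2 A * sv3 A) ^ (s / 3)

/-- The three matrices `C₁, C₂, C₃` (with 0-based indexing). -/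
def Cmat (p : ℝ) : Fin 3 → Mat3 :=
  ![!![1 - 2*p, -p, -p; 0, p, 0; 0, 0, p],
    !![p, 0, 0; -p, 1 - 2*p, -p; 0, 0, p],
    !![p, 0, 0; 0, p, 0; -p, -p, 1 - 2*p]]

/-- The product `C_w = C_{j₁} ⋯ C_{jₙ}` along a word `w = (j₁, …, jₙ)`. -/
noncomputable def Cword (p : ℝ) {n : ℕ} (w : Fin n → Fin 3) : Mat3 :=
  ((List.ofFn w).map (Cmat p)).prod

/-- standard basis vectors of `E3` -/
noncomputable def eVec (i : Fin 3) : E3 := EuclideanSpace.single i 1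

/-- The affine map `G_i(x) = C_i x + 2p·e_i`. -/
noncomputable def Gmap (p : ℝ) (i : Fin 3) (x : E3) : E3 :=
  matApply (Cmat p i) x + (2 * p) • eVec i

/-- The composition `G_w = G_{j₁} ∘ ⋯ ∘ G_{jₙ}` along a word `w = (j₁, …, jₙ)`. -/
noncomputable def Gword (p : ℝ) {n : ℕ} (w : Fin n → Fin 3) : E3 → E3 :=
  ((List.ofFn w).map (Gmap p)).foldr (· ∘ ·) id

/-- Summability of the double series `Σ_{n=1}^∞ Σ_{w ∈ {1,2,3}ⁿ} φ^s(C_w)`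
(all terms are nonnegative, so summability is equivalent to finiteness of the sum). -/
def seriesSummable (p s : ℝ) : Prop :=
  Summable (fun x : Σ n : ℕ, (Fin (n+1) → Fin 3) => svf s (Cword p x.2))

/-- The affinity dimension `s₀ = inf{s > 0 : Σ_n Σ_w φ^s(C_w) < ∞}`. -/
noncomputable def s0 (p : ℝ) : ℝ := sInf {s : ℝ | 0 < s ∧ seriesSummable p s}

/-- The minimal number of balls of radius `δ` needed to cover `A`. -/
noncomputable def coverNum (A : Set E3) (δ : ℝ) : ℕ :=
  sInf {n : ℕ | ∃ t : Finset E3, t.card = n ∧ A ⊆ ⋃ x ∈ t, Metric.ball x δ}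

/-- The upper box-counting dimension `limsup_{δ→0⁺} log N_δ(A) / (−log δ)`. -/
noncomputable def upperBoxDim (A : Set E3) : ℝ :=
  Filter.limsup (fun δ : ℝ => Real.log (coverNum A δ) / (-Real.log δ))
    (nhdsWithin 0 (Set.Ioi 0))

/-- The vector `(1,1,1)`. -/
noncomputable def onesVec : E3 := (WithLp.equiv 2 (Fin 3 → ℝ)).symm ![1, 1, 1]

/-- Orthogonal projection of `ℝ³` onto the plane `V = {x : x₁ + x₂ + x₃ = 0}`. -/
noncomputable def projV (x : E3) : E3 := x - (((x 0) + (x 1) + (x 2)) / 3) • onesVec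

/-- The vector `(a,b,c)` in `E3`. -/
noncomputable def vec3 (a b c : ℝ) : E3 := (WithLp.equiv 2 (Fin 3 → ℝ)).symm ![a, b, c]

/-- The triangle `T₀ = conv{e₁, e₂, e₃}`. -/
noncomputable def T0set : Set E3 := convexHull ℝ {eVec 0, eVec 1, eVec 2}

/-- The standard tetrahedron `W = conv{0, e₁, e₂, e₃}`. -/
noncomputable def Wset : Set E3 := convexHull ℝ {0, eVec 0, eVec 1, eVec 2}

/-- The triangle `T_ε = conv{(1−2ε,ε,ε), (ε,1−2ε,ε), (ε,ε,1−2ε)}`. -/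
noncomputable def Ttri (ε : ℝ) : Set E3 :=
  convexHull ℝ {vec3 (1 - 2*ε) ε ε, vec3 ε (1 - 2*ε) ε, vec3 ε ε (1 - 2*ε)}

/-!
Summing `C_w` over all words of length `n` gives `(C₁ + C₂ + C₃)ⁿ = ((1 + p)I − pJ)ⁿ`, which acts
as multiplication by `(1 + p)ⁿ` on the plane `x₁ + x₂ + x₃ = 0`. Hence `Σ_{|w| = n} ‖C_w‖ ≥ 1` on
every level, and by subadditivity of `t ↦ tˢ` the same holds for `Σ_{|w| = n} φˢ(C_w)` when
`s ≤ 1`. The infimum defining `s₀` must also be shown to range over a nonempty set (`sInf ∅ = 0`):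
`φ⁶(C_w) = det(C_w)² = (p²(1 − 2p))^{2|w|}` and `3 (p²(1 − 2p))² < 1`.
-/

theorem sum_prod_map_ofFn_eq_pow {R ι : Type*} [Semiring R] [Fintype ι] (f : ι → R) :
    ∀ n : ℕ, ∑ w : Fin n → ι, ((List.ofFn w).map f).prod = (∑ i, f i) ^ n
  | 0 => by simp
  | n + 1 => by
    rw [← (Fin.consEquiv fun _ : Fin (n + 1) => ι).sum_comp, Fintype.sum_prod_type, pow_succ',
      ← sum_prod_map_ofFn_eq_pow f n, Finset.sum_mul_sum]
    simp [List.ofFn_succ]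

theorem Matrix.pow_mulVec_of_mulVec_eq_smul {n R : Type*} [Fintype n] [DecidableEq n]
    [CommRing R] {M : Matrix n n R} {v : n → R} {c : R} (h : M *ᵥ v = c • v) :
    ∀ k : ℕ, (M ^ k) *ᵥ v = c ^ k • v
  | 0 => by simp
  | k + 1 => by
    rw [pow_succ, ← Matrix.mulVec_mulVec, h, Matrix.mulVec_smul,
      Matrix.pow_mulVec_of_mulVec_eq_smul h k, smul_smul, pow_succ']

theorem ContinuousLinearMap.norm_le_opNorm_of_apply_eq_smul {𝕜 E : Type*}
    [NontriviallyNormedField 𝕜] [NormedAddCommGroup E] [NormedSpace 𝕜 E] (T : E →L[𝕜] E)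
    {v : E} (hv : v ≠ 0) {c : 𝕜} (h : T v = c • v) : ‖c‖ ≤ ‖T‖ := by
  refine le_of_mul_le_mul_right ?_ (norm_pos_iff.mpr hv)
  calc ‖c‖ * ‖v‖ = ‖T v‖ := by rw [h, norm_smul]
    _ ≤ ‖T‖ * ‖v‖ := T.le_opNorm v

theorem Real.rpow_sum_le_sum_rpow {ι : Type*} (s : Finset ι) {f : ι → ℝ}
    (hf : ∀ i ∈ s, 0 ≤ f i) {q : ℝ} (hq0 : 0 < q) (hq1 : q ≤ 1) :
    (∑ i ∈ s, f i) ^ q ≤ ∑ i ∈ s, f i ^ q := by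
  classical
  induction s using Finset.induction_on with
  | empty => simp [Real.zero_rpow hq0.ne']
  | insert a s has ih =>
    rw [Finset.forall_mem_insert] at hf
    rw [Finset.sum_insert has, Finset.sum_insert has]
    calc (f a + ∑ i ∈ s, f i) ^ q ≤ f a ^ q + (∑ i ∈ s, f i) ^ q :=
          Real.rpow_add_le_add_rpow hf.1 (Finset.sum_nonneg hf.2) hq0.le hq1
      _ ≤ f a ^ q + ∑ i ∈ s, f i ^ q := by gcongr; exact ih hf.2

theorem not_summable_sigma_of_one_le_sum {β : ℕ → Type*} [∀ n, Fintype (β n)]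
    {f : (Σ n, β n) → ℝ} (hf : ∀ x, 0 ≤ f x) (h : ∀ n, 1 ≤ ∑ b, f ⟨n, b⟩) :
    ¬ Summable f := by
  intro hs
  have hlim := ((summable_sigma_of_nonneg hf).mp hs).2.tendsto_atTop_zero
  have : (1 : ℝ) ≤ 0 := ge_of_tendsto' hlim fun n => by rw [tsum_fintype]; exact h n
  norm_num at this

lemma sv1_eq_zero_iff {A : Mat3} : sv1 A = 0 ↔ A = 0 := by
  simp [sv1]

lemma sv3_eq_zero_iff {A : Mat3} : sv3 A = 0 ↔ A⁻¹ = 0 := by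
  simp [sv3]

lemma sv1_mul_sv2_mul_sv3 (A : Mat3) : sv1 A * sv2 A * sv3 A = |A.det| := by
  by_cases hdet : A.det = 0
  · simp [sv2, hdet]
  have hA : A ≠ 0 := fun h => hdet (by simp [h])
  have hAinv : A⁻¹ ≠ 0 := fun h => by
    simpa [h] using A.mul_nonsing_inv (Ne.isUnit hdet)
  have h1 : sv1 A ≠ 0 := sv1_eq_zero_iff.not.mpr hA
  have h3 : sv3 A ≠ 0 := sv3_eq_zero_iff.not.mpr hAinv
  rw [sv2]
  field_simp

lemma svf_of_le_one {s : ℝ} (hs : s ≤ 1) (A : Mat3) : svf s A = sv1 A ^ s := by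
  rw [svf, if_pos hs]

lemma svf_six (A : Mat3) : svf 6 A = A.det ^ 2 := by
  rw [svf, if_neg (by norm_num), if_neg (by norm_num), if_neg (by norm_num),
    sv1_mul_sv2_mul_sv3, show (6 : ℝ) / 3 = (2 : ℕ) by norm_num, Real.rpow_natCast, sq_abs]

lemma det_Cmat (p : ℝ) (i : Fin 3) : (Cmat p i).det = p ^ 2 * (1 - 2 * p) := by
  fin_cases i <;>
    simp [Cmat, Matrix.det_fin_three, -mul_eq_mul_right_iff, -mul_eq_mul_left_iff] <;> ring

lemma det_Cword (p : ℝ) {n : ℕ} (w : Fin n → Fin 3) :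
    (Cword p w).det = (p ^ 2 * (1 - 2 * p)) ^ n := by
  have hdet : Matrix.det ∘ Cmat p ∘ w = fun _ => p ^ 2 * (1 - 2 * p) :=
    funext fun i => det_Cmat p (w i)
  rw [Cword, ← Matrix.coe_detMonoidHom, map_list_prod]
  simp [hdet]

lemma sum_Cword (p : ℝ) (n : ℕ) :
    ∑ w : Fin n → Fin 3, Cword p w = (∑ i, Cmat p i) ^ n :=
  sum_prod_map_ofFn_eq_pow (Cmat p) n

lemma sum_Cmat_mulVec (p : ℝ) :
    (∑ i, Cmat p i) *ᵥ ![1, -1, 0] = (1 + p) • ![1, -1, 0] := by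
  ext i
  fin_cases i <;> simp [Cmat, Fin.sum_univ_three, Matrix.mulVec, dotProduct] <;> ring

lemma abs_one_add_pow_le_sum_sv1_Cword (p : ℝ) (n : ℕ) :
    |1 + p| ^ n ≤ ∑ w : Fin n → Fin 3, sv1 (Cword p w) := by
  set v : E3 := WithLp.toLp 2 ![1, -1, 0]
  have hv : v ≠ 0 := fun h => by simpa [v] using congrArg (fun x : E3 => x 0) h
  have heigen : Matrix.toEuclideanCLM (𝕜 := ℝ) (∑ w : Fin n → Fin 3, Cword p w) v =
      (1 + p) ^ n • v := by
    rw [sum_Cword, Matrix.toEuclideanCLM_toLp,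
      Matrix.pow_mulVec_of_mulVec_eq_smul (sum_Cmat_mulVec p), WithLp.toLp_smul]
  calc |1 + p| ^ n = ‖(1 + p) ^ n‖ := by rw [norm_pow, Real.norm_eq_abs]
    _ ≤ ‖Matrix.toEuclideanCLM (𝕜 := ℝ) (∑ w : Fin n → Fin 3, Cword p w)‖ :=
      ContinuousLinearMap.norm_le_opNorm_of_apply_eq_smul _ hv heigen
    _ ≤ ∑ w : Fin n → Fin 3, sv1 (Cword p w) := by
      rw [map_sum]
      exact norm_sum_le _ _

lemma one_le_sum_sv1_Cword {p : ℝ} (hp : 0 ≤ p) (n : ℕ) :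
    1 ≤ ∑ w : Fin n → Fin 3, sv1 (Cword p w) :=
  (one_le_pow₀ (le_abs.mpr (Or.inl (by linarith)))).trans (abs_one_add_pow_le_sum_sv1_Cword p n)

lemma one_le_sum_svf_Cword {p s : ℝ} (hp : 0 ≤ p) (hs0 : 0 < s) (hs1 : s ≤ 1) (n : ℕ) :
    1 ≤ ∑ w : Fin n → Fin 3, svf s (Cword p w) := by
  simp only [svf_of_le_one hs1]
  calc 1 ≤ (∑ w : Fin n → Fin 3, sv1 (Cword p w)) ^ s :=
        Real.one_le_rpow (one_le_sum_sv1_Cword hp n) hs0.le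
    _ ≤ ∑ w : Fin n → Fin 3, sv1 (Cword p w) ^ s :=
        Real.rpow_sum_le_sum_rpow _ (fun _ _ => norm_nonneg _) hs0 hs1

lemma not_seriesSummable_of_le_one {p s : ℝ} (hp : 0 ≤ p) (hs0 : 0 < s) (hs1 : s ≤ 1) :
    ¬ seriesSummable p s :=
  not_summable_sigma_of_one_le_sum
    (fun x => by rw [svf_of_le_one hs1]; exact Real.rpow_nonneg (norm_nonneg _) s)
    (fun n => one_le_sum_svf_Cword hp hs0 hs1 (n + 1))

lemma seriesSummable_six {p : ℝ} (hp0 : 0 < p) (hp1 : p < 1 / 2) : seriesSummable p 6 := by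
  have hratio : 3 * (p ^ 2 * (1 - 2 * p)) ^ 2 < 1 := by
    have hD0 : 0 < p ^ 2 * (1 - 2 * p) := mul_pos (by positivity) (by linarith)
    have hD1 : p ^ 2 * (1 - 2 * p) < 1 / 4 := by nlinarith [mul_pos (pow_pos hp0 2) hp0]
    nlinarith
  unfold seriesSummable
  simp only [svf_six, det_Cword]
  refine (summable_sigma_of_nonneg fun x => by positivity).mpr
    ⟨fun n => (hasSum_fintype _).summable, ?_⟩
  simp only [tsum_fintype, Finset.sum_const, Finset.card_univ, Fintype.card_fun, Fintype.card_fin,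
    nsmul_eq_mul]
  refine ((summable_nat_add_iff 1).mpr
    (summable_geometric_of_lt_one (by positivity) hratio)).congr fun n => ?_
  push_cast
  rw [mul_pow, ← pow_mul, ← pow_mul, mul_comm (n + 1)]

/-- Theorem (the sum of the norms `‖C_w‖` over all nonempty words diverges, hence `s₀ ≥ 1`). -/
theorem sum_norms_diverges (p : ℝ) (hp0 : 0 < p) (hp1 : p < 1/2) :
    ¬ Summable (fun x : Σ n : ℕ, (Fin (n+1) → Fin 3) => sv1 (Cword p x.2)) ∧ 1 ≤ s0 p := by
  refine ⟨not_summable_sigma_of_one_le_sum (fun _ => norm_nonneg _)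
    fun n => one_le_sum_sv1_Cword hp0.le (n + 1), ?_⟩
  refine le_csInf ⟨6, by norm_num, seriesSummable_six hp0 hp1⟩ ?_
  rintro s ⟨hs0, hs⟩
  by_contra! hs1
  exact not_seriesSummable_of_le_one hp0.le hs0 hs1.le hs
end
end

section
/- There exists a constant c > 0 such that for every invertible 3×3 real matrix B all of whose inverse's entries are nonnegative, and for every w ∈ ℝ³ with w₁ + w₂ + w₃ = 0, one has ‖proj(Bw)‖ ≥ c · α₂(B) · ‖w‖. -/
/-!
Write `𝟙 = (1,1,1)`. For `w ⊥ 𝟙` the projection is `y = B w + t 𝟙` for some `t`, so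
`y × 𝟙 = B w × B (B⁻¹ 𝟙)`. The cofactor identity `Bᵀ (B u × B v) = det B • (u × v)` and the
expansion of a vector triple product then give `𝟙 × Bᵀ (y × 𝟙) = (det B * ⟪𝟙, B⁻¹ 𝟙⟫) • w`, whence
`|det B| ⟪𝟙, B⁻¹ 𝟙⟫ ‖w‖ ≤ 3 ‖B‖ ‖y‖`. Since `B⁻¹` is entrywise nonnegative, `⟪𝟙, B⁻¹ 𝟙⟫`, the sum of
its entries, bounds `‖B⁻¹‖`, and `α₂(B) = |det B| ‖B⁻¹‖ / ‖B‖` gives the claim with `c = 1/3`.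
-/

open Matrix MeasureTheory Filter
open scoped ENNReal

noncomputable section

open WithLp

theorem Matrix.cross_mulVec_mulVec {R : Type*} [CommRing R] (B : Matrix (Fin 3) (Fin 3) R)
    (u v : Fin 3 → R) : (B *ᵥ u) ⨯₃ (B *ᵥ v) = B.adjugateᵀ *ᵥ (u ⨯₃ v) := by
  ext i
  fin_cases i <;> simp [cross_apply, adjugate_fin_three, mulVec, dotProduct, Fin.sum_univ_three] <;>
    ring

theorem Matrix.transpose_mulVec_cross_mulVec {R : Type*} [CommRing R]
    (B : Matrix (Fin 3) (Fin 3) R) (u v : Fin 3 → R) :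
    Bᵀ *ᵥ ((B *ᵥ u) ⨯₃ (B *ᵥ v)) = B.det • (u ⨯₃ v) := by
  rw [cross_mulVec_mulVec, mulVec_mulVec, ← transpose_mul, adjugate_mul, transpose_smul,
    transpose_one, smul_mulVec, one_mulVec]

theorem Matrix.cross_transpose_mulVec_cross {R : Type*} [CommRing R]
    {B : Matrix (Fin 3) (Fin 3) R} (hB : IsUnit B.det) {a w : Fin 3 → R} (haw : a ⬝ᵥ w = 0)
    (t : R) : a ⨯₃ (Bᵀ *ᵥ ((B *ᵥ w + t • a) ⨯₃ a)) = (B.det * (a ⬝ᵥ B⁻¹ *ᵥ a)) • w := by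
  have hcross : (B *ᵥ w + t • a) ⨯₃ a = (B *ᵥ w) ⨯₃ (B *ᵥ (B⁻¹ *ᵥ a)) := by
    rw [mulVec_mulVec, mul_nonsing_inv B hB, one_mulVec, LinearMap.map_add₂, LinearMap.map_smul₂,
      cross_self, smul_zero, add_zero]
  rw [hcross, transpose_mulVec_cross_mulVec, LinearMap.map_smul, cross_cross_eq_smul_sub_smul',
    dotProduct_comm w, haw, zero_smul, sub_zero, smul_smul]

theorem EuclideanSpace.norm_cross_le (a b : EuclideanSpace ℝ (Fin 3)) :
    ‖toLp 2 (ofLp a ⨯₃ ofLp b)‖ ≤ ‖a‖ * ‖b‖ := by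
  rw [InnerProductGeometry.norm_ofLp_crossProduct]
  exact mul_le_of_le_one_right (by positivity) (Real.sin_le_one _)

theorem EuclideanSpace.norm_le_sum_norm {𝕜 ι : Type*} [RCLike 𝕜] [Fintype ι]
    (x : EuclideanSpace 𝕜 ι) : ‖x‖ ≤ ∑ i, ‖x i‖ := by
  conv_lhs => rw [← (EuclideanSpace.basisFun ι 𝕜).sum_repr x]
  refine (norm_sum_le _ _).trans_eq (Finset.sum_congr rfl fun i _ => ?_)
  simp [norm_smul]

theorem Matrix.norm_toEuclideanCLM_le_sum_norm {𝕜 n : Type*} [RCLike 𝕜] [Fintype n]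
    [DecidableEq n] (A : Matrix n n 𝕜) :
    ‖toEuclideanCLM (𝕜 := 𝕜) A‖ ≤ ∑ i, ∑ j, ‖A i j‖ := by
  refine ContinuousLinearMap.opNorm_le_bound _ (by positivity) fun x => ?_
  calc ‖toEuclideanCLM (𝕜 := 𝕜) A x‖ ≤ ∑ i, ‖(A *ᵥ ofLp x) i‖ :=
        EuclideanSpace.norm_le_sum_norm _
    _ ≤ ∑ i, ∑ j, ‖A i j‖ * ‖x‖ := by
        refine Finset.sum_le_sum fun i _ =>
          (norm_sum_le _ _).trans (Finset.sum_le_sum fun j _ => ?_)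
        rw [norm_mul]
        gcongr
        exact PiLp.norm_apply_le x j
    _ = (∑ i, ∑ j, ‖A i j‖) * ‖x‖ := by simp only [Finset.sum_mul]

theorem Matrix.norm_toEuclideanCLM_transpose {n : Type*} [Fintype n] [DecidableEq n]
    (B : Matrix n n ℝ) : ‖toEuclideanCLM (𝕜 := ℝ) Bᵀ‖ = ‖toEuclideanCLM (𝕜 := ℝ) B‖ := by
  rw [← conjTranspose_eq_transpose_of_trivial, ← star_eq_conjTranspose, map_star,
    ContinuousLinearMap.star_eq_adjoint, LinearIsometryEquiv.norm_map]

theorem abs_det_mul_dotProduct_inv_mul_norm_le {B : Matrix (Fin 3) (Fin 3) ℝ}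
    (hB : IsUnit B.det)
    {a w : EuclideanSpace ℝ (Fin 3)} (haw : ofLp a ⬝ᵥ ofLp w = 0) (t : ℝ) :
    |B.det * (ofLp a ⬝ᵥ B⁻¹ *ᵥ ofLp a)| * ‖w‖ ≤
      ‖a‖ ^ 2 * ‖toEuclideanCLM (𝕜 := ℝ) B‖ * ‖toEuclideanCLM (𝕜 := ℝ) B w + t • a‖ := by
  set y := toEuclideanCLM (𝕜 := ℝ) B w + t • a
  have hy : ofLp y = B *ᵥ ofLp w + t • ofLp a := by simp [y]
  have key : (B.det * (ofLp a ⬝ᵥ B⁻¹ *ᵥ ofLp a)) • w =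
      toLp 2 (ofLp a ⨯₃ ofLp (toEuclideanCLM (𝕜 := ℝ) Bᵀ (toLp 2 (ofLp y ⨯₃ ofLp a)))) := by
    rw [ofLp_toEuclideanCLM, hy, cross_transpose_mulVec_cross hB haw]
    rfl
  calc |B.det * (ofLp a ⬝ᵥ B⁻¹ *ᵥ ofLp a)| * ‖w‖
      = ‖(B.det * (ofLp a ⬝ᵥ B⁻¹ *ᵥ ofLp a)) • w‖ := by rw [norm_smul, Real.norm_eq_abs]
    _ ≤ ‖a‖ * (‖toEuclideanCLM (𝕜 := ℝ) Bᵀ‖ * (‖y‖ * ‖a‖)) := by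
        rw [key]
        refine (EuclideanSpace.norm_cross_le _ _).trans ?_
        gcongr
        refine ((toEuclideanCLM (𝕜 := ℝ) Bᵀ).le_opNorm _).trans ?_
        gcongr
        exact EuclideanSpace.norm_cross_le _ _
    _ = ‖a‖ ^ 2 * ‖toEuclideanCLM (𝕜 := ℝ) B‖ * ‖y‖ := by
        rw [norm_toEuclideanCLM_transpose]; ring

theorem ofLp_onesVec : ofLp onesVec = 1 := by
  ext i; fin_cases i <;> rfl

theorem norm_onesVec_sq : ‖onesVec‖ ^ 2 = 3 := by
  simp [EuclideanSpace.norm_sq_eq, ofLp_onesVec]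

theorem projV_eq_add_smul_onesVec (x : E3) :
    projV x = x + (-((x 0 + x 1 + x 2) / 3)) • onesVec := by
  rw [projV, neg_smul, sub_eq_add_neg]

theorem sv2_eq (A : Mat3) :
    sv2 A = |A.det| * ‖toEuclideanCLM (𝕜 := ℝ) A⁻¹‖ / ‖toEuclideanCLM (𝕜 := ℝ) A‖ := by
  rw [sv2, sv1, sv3, div_mul_eq_div_div, div_inv_eq_mul, div_mul_eq_mul_div]

/-- Lemma (projection of the image of the plane `V` is comparable to `α₂`). -/
theorem proj_image_lower_bound :
    ∃ c : ℝ, 0 < c ∧ ∀ B : Mat3, IsUnit B → (∀ i j, 0 ≤ B⁻¹ i j) →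
      ∀ w : E3, w 0 + w 1 + w 2 = 0 →
        c * sv2 B * ‖w‖ ≤ ‖projV (matApply B w)‖ := by
  refine ⟨1 / 3, by norm_num, fun B hB hinv w hw => ?_⟩
  have hdet : IsUnit B.det := (isUnit_iff_isUnit_det B).mp hB
  have hB_norm : 0 < ‖toEuclideanCLM (𝕜 := ℝ) B‖ := by simpa using hB.ne_zero
  have hq : ‖toEuclideanCLM (𝕜 := ℝ) B⁻¹‖ ≤ 1 ⬝ᵥ B⁻¹ *ᵥ 1 := by
    refine (norm_toEuclideanCLM_le_sum_norm _).trans_eq ?_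
    simp [Real.norm_of_nonneg (hinv _ _), mulVec, dotProduct]
  have hw' : ofLp onesVec ⬝ᵥ ofLp w = 0 := by
    rwa [ofLp_onesVec, one_dotProduct, Fin.sum_univ_three]
  have hmain := abs_det_mul_dotProduct_inv_mul_norm_le hdet hw'
    (-((matApply B w 0 + matApply B w 1 + matApply B w 2) / 3))
  rw [norm_onesVec_sq, ofLp_onesVec, abs_mul, abs_of_nonneg ((norm_nonneg _).trans hq)] at hmain
  rw [sv2_eq, projV_eq_add_smul_onesVec]
  calc 1 / 3 * (|B.det| * ‖toEuclideanCLM (𝕜 := ℝ) B⁻¹‖ / ‖toEuclideanCLM (𝕜 := ℝ) B‖) * ‖w‖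
      ≤ 1 / 3 * (|B.det| * (1 ⬝ᵥ B⁻¹ *ᵥ 1) / ‖toEuclideanCLM (𝕜 := ℝ) B‖) * ‖w‖ := by gcongr
    _ = |B.det| * (1 ⬝ᵥ B⁻¹ *ᵥ 1) * ‖w‖ / (3 * ‖toEuclideanCLM (𝕜 := ℝ) B‖) := by
        field_simp
    _ ≤ _ := by rw [div_le_iff₀ (by positivity)]; exact hmain.trans_eq (mul_comm _ _)
end
end

section
/- Let B be an invertible 3×3 real matrix all of whose inverse's entries are nonnegative, let t ∈ ℝ³, and define the affine map G(x) = Bx + t. Then: (i) for every vector w ∈ ℝ³ with strictly positive coordinates there exists c > 0 such that G(0) + c·w ∈ G(T₀); (ii) for every 2-dimensional linear subspace Y of ℝ³ whose normal vector has strictly positive coordinates, the orthogonal projections onto Y satisfy proj_Y(G(W)) = proj_Y(G(T₀)). -/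
open Matrix MeasureTheory Filter
open scoped ENNReal

noncomputable section

/-! With `v = B⁻¹ w` (nonnegative, and nonzero since `B v = w`), the map `G x = B x + t` satisfies
`G (x + c • v) = G x + c • w`. Moving a point `x` of `W` along `v` raises its coordinate sum
until it reaches the face `T₀`, at time `c = (1 - ∑ x) / ∑ v ≥ 0`. Starting from `x = 0` gives (i);
if `Y ⊥ w`, the translation by `c • w` is invisible to `proj_Y`, so `proj_Y G(W) ⊆ proj_Y G(T₀)`,
and the other inclusion is `T₀ ⊆ W`. -/

lemma matApply_apply (A : Mat3) (x : E3) (i : Fin 3) : matApply A x i = ∑ j, A i j * x j := by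
  simp [matApply, Matrix.mulVec, dotProduct]

lemma matApply_add_smul (A : Mat3) (x v : E3) (c : ℝ) :
    matApply A (x + c • v) = matApply A x + c • matApply A v := by
  simp only [matApply, map_add, map_smul]

lemma matApply_matApply_inv {B : Mat3} (hB : IsUnit B) (w : E3) :
    matApply B (matApply B⁻¹ w) = w := by
  have hBB : B * B⁻¹ = 1 := Matrix.mul_nonsing_inv B ((Matrix.isUnit_iff_isUnit_det B).mp hB)
  change (Matrix.toEuclideanCLM (𝕜 := ℝ) B * Matrix.toEuclideanCLM (𝕜 := ℝ) B⁻¹) w = w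
  rw [← map_mul, hBB, map_one]
  rfl

lemma matApply_nonneg {A : Mat3} (hA : ∀ i j, 0 ≤ A i j) {w : E3} (hw : ∀ i, 0 ≤ w i)
    (i : Fin 3) : 0 ≤ matApply A w i := by
  rw [matApply_apply]
  exact Finset.sum_nonneg fun j _ => mul_nonneg (hA i j) (hw j)

lemma sum_matApply_inv_pos {B : Mat3} (hB : IsUnit B) (hBinv : ∀ i j, 0 ≤ B⁻¹ i j) {w : E3}
    (hw : ∀ i, 0 < w i) : 0 < ∑ i, matApply B⁻¹ w i := by
  have hv : matApply B⁻¹ w ≠ 0 := by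
    intro h
    have hw0 := matApply_matApply_inv hB w
    rw [h] at hw0
    simp only [matApply, map_zero] at hw0
    simpa [← hw0] using hw 0
  obtain ⟨i, hi⟩ : ∃ i, matApply B⁻¹ w i ≠ 0 := by
    by_contra! h
    exact hv (PiLp.ext h)
  exact Finset.sum_pos' (fun j _ => matApply_nonneg hBinv (fun k => (hw k).le) j)
    ⟨i, Finset.mem_univ i, (matApply_nonneg hBinv (fun k => (hw k).le) i).lt_of_ne' hi⟩

lemma mem_T0set_of_nonneg_of_sum_eq_one {y : E3} (h0 : ∀ i, 0 ≤ y i) (h1 : ∑ i, y i = 1) :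
    y ∈ T0set := by
  have hy : Finset.univ.centerMass (fun i => y i) eVec = y := by
    rw [Finset.centerMass, h1, inv_one, one_smul, Fin.sum_univ_three]
    ext j
    fin_cases j <;> simp [eVec]
  rw [← hy]
  exact Finset.centerMass_mem_convexHull _ (fun i _ => h0 i) (by rw [h1]; norm_num)
    (fun i _ => by fin_cases i <;> simp)

lemma Wset_subset_nonneg_sum_le_one : Wset ⊆ {x : E3 | (∀ i, 0 ≤ x i) ∧ ∑ i, x i ≤ 1} := by
  have hconv : Convex ℝ {x : E3 | (∀ i, 0 ≤ x i) ∧ ∑ i, x i ≤ 1} := by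
    intro x hx y hy a b ha hb hab
    refine ⟨fun i => ?_, ?_⟩
    · simpa using add_nonneg (mul_nonneg ha (hx.1 i)) (mul_nonneg hb (hy.1 i))
    · simp only [PiLp.add_apply, PiLp.smul_apply, smul_eq_mul, Finset.sum_add_distrib,
        ← Finset.mul_sum]
      nlinarith [hx.2, hy.2]
  refine convexHull_min ?_ hconv
  rintro x (rfl | rfl | rfl | rfl) <;>
    exact ⟨fun i => by fin_cases i <;> simp [eVec], by simp [eVec]⟩

lemma add_smul_mem_T0set {x v : E3} (hx : x ∈ Wset) (hv : ∀ i, 0 ≤ v i) (hS : 0 < ∑ i, v i) :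
    x + ((1 - ∑ i, x i) / ∑ i, v i) • v ∈ T0set := by
  obtain ⟨hx0, hx1⟩ := Wset_subset_nonneg_sum_le_one hx
  have hc : 0 ≤ (1 - ∑ i, x i) / ∑ i, v i := div_nonneg (by linarith) hS.le
  apply mem_T0set_of_nonneg_of_sum_eq_one
  · intro i
    simpa using add_nonneg (hx0 i) (mul_nonneg hc (hv i))
  · simp only [PiLp.add_apply, PiLp.smul_apply, smul_eq_mul, Finset.sum_add_distrib,
      ← Finset.mul_sum]
    field_simp
    ring

lemma orthogonalProjectionOnto_add_smul_of_mem_orthogonal {E : Type*} [NormedAddCommGroup E]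
    [InnerProductSpace ℝ E] {Y : Submodule ℝ E} [Y.HasOrthogonalProjection] {w : E}
    (hw : w ∈ Yᗮ) (a : E) (c : ℝ) :
    Y.orthogonalProjectionOnto (a + c • w) = Y.orthogonalProjectionOnto a := by
  rw [map_add, map_smul, Submodule.orthogonalProjectionOnto_apply_of_mem_orthogonal hw,
    smul_zero, add_zero]

/-- Lemma (shape of the image of the tetrahedron under an affine map with nonnegative inverse). -/
theorem shape_lemma (B : Mat3) (hB : IsUnit B) (hBinv : ∀ i j, 0 ≤ B⁻¹ i j) (t : E3) :
    (∀ w : E3, (∀ i, 0 < w i) → ∃ c : ℝ, 0 < c ∧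
      (matApply B 0 + t) + c • w ∈ (fun x => matApply B x + t) '' T0set) ∧
    (∀ Y : Submodule ℝ E3,
      (∃ w : E3, (∀ i, 0 < w i) ∧ Y = (Submodule.span ℝ {w})ᗮ) →
      (Submodule.orthogonalProjectionOnto Y) '' ((fun x => matApply B x + t) '' Wset) =
        (Submodule.orthogonalProjectionOnto Y) '' ((fun x => matApply B x + t) '' T0set)) := by
  have hv : ∀ w : E3, (∀ i, 0 < w i) → ∀ i, 0 ≤ matApply B⁻¹ w i :=
    fun w hw => matApply_nonneg hBinv fun i => (hw i).le
  have hshift : ∀ (x w : E3) (c : ℝ),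
      matApply B (x + c • matApply B⁻¹ w) + t = (matApply B x + t) + c • w := by
    intro x w c
    rw [matApply_add_smul, matApply_matApply_inv hB]
    abel
  refine ⟨fun w hw => ?_, ?_⟩
  · have hS := sum_matApply_inv_pos hB hBinv hw
    have h0 : (0 : E3) ∈ Wset := subset_convexHull ℝ _ (Set.mem_insert _ _)
    exact ⟨_, by simpa using hS, _, add_smul_mem_T0set h0 (hv w hw) hS, hshift 0 w _⟩
  · rintro Y ⟨w, hw, rfl⟩
    have hwY : w ∈ (Submodule.span ℝ {w})ᗮᗮ :=
      Submodule.le_orthogonal_orthogonal _ (Submodule.mem_span_singleton_self w)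
    refine (Set.image_mono (Set.image_mono (convexHull_mono (Set.subset_insert _ _)))).antisymm' ?_
    rintro _ ⟨_, ⟨x, hx, rfl⟩, rfl⟩
    refine ⟨_, ⟨_, add_smul_mem_T0set hx (hv w hw) (sum_matApply_inv_pos hB hBinv hw), rfl⟩, ?_⟩
    dsimp only
    rw [hshift, orthogonalProjectionOnto_add_smul_of_mem_orthogonal hwY]
end
end

section
/- Let 0 < p < 1/2. Then for each i ∈ {1,2,3}, G_i maps the interior of W into the interior of W, and for all i ≠ j in {1,2,3}, G_i(W°) ∩ G_j(W°) = ∅. In particular, the iterated function system {G₁, G₂, G₃} satisfies the open set condition with open set W°. -/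
open Matrix MeasureTheory Filter
open scoped ENNReal

noncomputable section

/-!
The interior of `W` is the open corner simplex `{x | 0 < xᵢ, x₁ + x₂ + x₃ < 1}`. In coordinates
`G_i x = p x + ((1 - 2p) xᵢ + p (2 - Σₖ xₖ)) eᵢ`, so for `x` in the open simplex all coordinates of
`G_i x` are positive, their sum is `(1 - 2p) xᵢ + 2p < 1`, and the `i`-th one strictly exceeds the
others. The last property separates the images of the open simplex under different `G_i`.
-/

open Set Finset Topology

lemma lt_of_mem_interior_of_forall_le {E : Type*} [AddCommGroup E] [Module ℝ E]
    [TopologicalSpace E] [ContinuousAdd E] [ContinuousSMul ℝ E] {s : Set E} {f : E →ₗ[ℝ] ℝ}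
    {c : ℝ} (hs : ∀ y ∈ s, f y ≤ c) {v : E} (hv : 0 < f v) {x : E} (hx : x ∈ interior s) :
    f x < c := by
  have hline : Tendsto (fun t : ℝ => x + t • v) (𝓝 0) (𝓝 x) := by
    simpa using tendsto_const_nhds.add ((tendsto_id (x := 𝓝 (0 : ℝ))).smul_const v)
  have hnear : ∀ᶠ t in 𝓝[>] (0 : ℝ), x + t • v ∈ s :=
    (hline.eventually (mem_interior_iff_mem_nhds.1 hx)).filter_mono nhdsWithin_le_nhds
  obtain ⟨t, hts, ht⟩ := (hnear.and self_mem_nhdsWithin).exists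
  have := hs _ hts
  rw [map_add, map_smul, smul_eq_mul] at this
  nlinarith [mul_pos (Set.mem_Ioi.1 ht) hv]

section CornerSimplex

variable {ι : Type*} [Fintype ι]

def openCornerSimplex (ι : Type*) [Fintype ι] : Set (EuclideanSpace ℝ ι) :=
  {x | (∀ i, 0 < x i) ∧ ∑ i, x i < 1}

lemma isOpen_openCornerSimplex : IsOpen (openCornerSimplex ι) := by
  rw [openCornerSimplex, ofPred_and, ofPred_forall]
  exact (isOpen_iInter_of_finite fun i => isOpen_lt continuous_const (by fun_prop)).inter
    (isOpen_lt (by fun_prop) continuous_const)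

variable [DecidableEq ι]

lemma convexHull_zero_single_subset :
    convexHull ℝ (insert 0 (range fun i => EuclideanSpace.single i (1 : ℝ))) ⊆
      {x : EuclideanSpace ℝ ι | (∀ i, 0 ≤ x i) ∧ ∑ i, x i ≤ 1} := by
  refine convexHull_min ?_ ?_
  · rintro y (rfl | ⟨j, rfl⟩)
    · simp
    · refine ⟨fun i => ?_, by simp⟩
      by_cases h : i = j <;> simp [h]
  · rintro x ⟨hx, hxs⟩ y ⟨hy, hys⟩ a b ha hb hab
    refine ⟨fun i => ?_, ?_⟩
    · simp only [PiLp.add_apply, PiLp.smul_apply, smul_eq_mul]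
      nlinarith [hx i, hy i]
    · simp only [PiLp.add_apply, PiLp.smul_apply, smul_eq_mul, Finset.sum_add_distrib,
        ← Finset.mul_sum]
      nlinarith

lemma mem_convexHull_zero_single {x : EuclideanSpace ℝ ι} (hx : ∀ i, 0 ≤ x i)
    (hxs : ∑ i, x i ≤ 1) :
    x ∈ convexHull ℝ (insert 0 (range fun i => EuclideanSpace.single i (1 : ℝ))) := by
  have hmem := (convex_convexHull ℝ
      (insert 0 (range fun i => EuclideanSpace.single i (1 : ℝ)))).sum_mem
    (t := univ) (w := fun o : Option ι => o.elim (1 - ∑ i, x i) x)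
    (z := fun o => o.elim 0 fun i => EuclideanSpace.single i 1)
    (by rintro (_ | i) - <;> simp [hx, hxs]) (by simp [Fintype.sum_option])
    (by rintro (_ | i) - <;> apply subset_convexHull <;> simp)
  have hx_eq : ∑ i, x i • EuclideanSpace.single i (1 : ℝ) = x := by
    simpa using (EuclideanSpace.basisFun ι ℝ).sum_repr x
  simpa [Fintype.sum_option, hx_eq] using hmem

lemma interior_convexHull_zero_single_subset :
    interior (convexHull ℝ (insert 0 (range fun i => EuclideanSpace.single i (1 : ℝ)))) ⊆
      openCornerSimplex ι := by
  intro x hx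
  refine ⟨fun i => ?_, ?_⟩
  · have := lt_of_mem_interior_of_forall_le
      (f := -(EuclideanSpace.proj i : EuclideanSpace ℝ ι →L[ℝ] ℝ).toLinearMap) (c := 0)
      (v := -EuclideanSpace.single i 1)
      (fun y hy => by simpa using (convexHull_zero_single_subset hy).1 i) (by simp) hx
    simpa using this
  · by_cases hpos : ∑ i, x i ≤ 0
    · linarith
    · have := lt_of_mem_interior_of_forall_le
        (f := (∑ i, EuclideanSpace.proj i : EuclideanSpace ℝ ι →L[ℝ] ℝ).toLinearMap) (c := 1)
        (v := x) (fun y hy => by simpa using (convexHull_zero_single_subset hy).2)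
        (by simpa using hpos) hx
      simpa using this

theorem interior_convexHull_zero_single :
    interior (convexHull ℝ (insert 0 (range fun i => EuclideanSpace.single i (1 : ℝ)))) =
      openCornerSimplex ι :=
  interior_convexHull_zero_single_subset.antisymm <| interior_maximal
    (fun _ hx => mem_convexHull_zero_single (fun i => (hx.1 i).le) hx.2.le)
    isOpen_openCornerSimplex

end CornerSimplex

lemma Wset_eq_convexHull :
    Wset = convexHull ℝ (insert 0 (range fun i : Fin 3 => EuclideanSpace.single i (1 : ℝ))) := by
  rw [Wset, Fin.range_fin_succ, Fin.range_fin_succ, Fin.range_fin_succ]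
  simp [eVec, Set.range_eq_empty, Fin.tail]

lemma interior_Wset : interior Wset = openCornerSimplex (Fin 3) := by
  rw [Wset_eq_convexHull, interior_convexHull_zero_single]

lemma Gmap_apply (p : ℝ) (i : Fin 3) (x : E3) (j : Fin 3) :
    Gmap p i x j = p * x j + if j = i then (1 - 2 * p) * x i + p * (2 - ∑ k, x k) else 0 := by
  simp only [Gmap, matApply, PiLp.add_apply, Matrix.ofLp_toEuclideanCLM, PiLp.smul_apply]
  fin_cases i <;> fin_cases j <;>
    simp [Cmat, mulVec, dotProduct, Fin.sum_univ_three, eVec] <;> ring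

lemma sum_Gmap_apply (p : ℝ) (i : Fin 3) (x : E3) :
    ∑ j, Gmap p i x j = (1 - 2 * p) * x i + 2 * p := by
  simp only [Gmap_apply, Finset.sum_add_distrib, ← Finset.mul_sum, Finset.sum_ite_eq',
    Finset.mem_univ, if_true]
  ring

section Gmap

variable {p : ℝ} {x : E3}

lemma Gmap_mem_openCornerSimplex (hp0 : 0 < p) (hp1 : p < 1 / 2) (i : Fin 3)
    (hx : x ∈ openCornerSimplex (Fin 3)) : Gmap p i x ∈ openCornerSimplex (Fin 3) := by
  obtain ⟨hpos, hsum⟩ := hx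
  have hxi : x i < 1 := by
    linarith [Finset.single_le_sum (fun k _ => (hpos k).le) (Finset.mem_univ i)]
  refine ⟨fun j => ?_, ?_⟩
  · rw [Gmap_apply]
    split_ifs with hji
    · subst hji; nlinarith [hpos j]
    · nlinarith [hpos j]
  · rw [sum_Gmap_apply]
    nlinarith

lemma Gmap_apply_lt_apply_self (hp0 : 0 ≤ p) (hp1 : p < 1) {i j : Fin 3} (hji : j ≠ i)
    (hx : x ∈ openCornerSimplex (Fin 3)) : Gmap p i x j < Gmap p i x i := by
  obtain ⟨hpos, hsum⟩ := hx
  have hxj : x j ≤ ∑ k, x k := Finset.single_le_sum (fun k _ => (hpos k).le) (Finset.mem_univ j)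
  rw [Gmap_apply, Gmap_apply, if_neg hji, if_pos rfl]
  nlinarith [hpos i]

end Gmap

/-- Lemma (the maps `G₁, G₂, G₃` satisfy the open set condition with the open tetrahedron). -/
theorem open_set_condition (p : ℝ) (hp0 : 0 < p) (hp1 : p < 1/2) :
    (∀ i : Fin 3, Gmap p i '' interior Wset ⊆ interior Wset) ∧
    (∀ i j : Fin 3, i ≠ j →
      Gmap p i '' interior Wset ∩ Gmap p j '' interior Wset = ∅) := by
  rw [interior_Wset]
  refine ⟨fun i => image_subset_iff.2 fun x hx => Gmap_mem_openCornerSimplex hp0 hp1 i hx, ?_⟩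
  rintro i j hij
  refine eq_empty_iff_forall_notMem.2 ?_
  rintro _ ⟨⟨x, hx, rfl⟩, ⟨y, hy, hyx⟩⟩
  have hi := Gmap_apply_lt_apply_self hp0.le (by linarith) hij.symm hx
  have hj := Gmap_apply_lt_apply_self hp0.le (by linarith) hij hy
  rw [hyx] at hj
  exact lt_asymm hi hj
end
end
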